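/- arXiv:2510.12653 — 9 statements merged into one kernel-verified Lean document; each statement's English description precedes it below -/
import Mathlib

section
/- If π_t : Θ → (0,1) is increasing and π_d(θ) = (π_t(θ))^c for a constant c ∈ (0,1), then t is more difficult than d. -/
/-!
Write `x = πt θ' ≤ y = πt θ`. The first inequality is `(y / x) ^ c ≤ y / x`, valid because `y / x ≥ 1` and
`c ≤ 1`. The second says that the secant slope `(1 - u ^ c) / (1 - u)` of `u ↦ u ^ c` through
the point `(1, 1)` is antitone on `[0, 1)`, which is the concavity of `u ↦ u ^ c` for `c ∈ [0, 1]`.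
-/

open Set

namespace Real

lemma rpow_mul_le_mul_rpow {c x y : ℝ} (hc : c ≤ 1) (hx : 0 < x) (hxy : x ≤ y) :
    y ^ c * x ≤ y * x ^ c := by
  have hy : 0 < y := hx.trans_le hxy
  have hratio : (y / x) ^ c ≤ y / x := rpow_le_self_of_one_le ((one_le_div hx).2 hxy) hc
  rwa [div_rpow hy.le hx.le, div_le_div_iff₀ (rpow_pos_of_pos hx c) hx] at hratio

lemma one_sub_rpow_mul_one_sub_le {c x y : ℝ} (hc₀ : 0 ≤ c) (hc₁ : c ≤ 1) (hx : 0 ≤ x)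
    (hxy : x ≤ y) (hy : y < 1) :
    (1 - y ^ c) * (1 - x) ≤ (1 - y) * (1 - x ^ c) := by
  have hslope : (-x ^ c - -1 ^ c) / (x - 1) ≤ (-y ^ c - -1 ^ c) / (y - 1) :=
    (concaveOn_rpow hc₀ hc₁).neg.secant_mono (a := 1) (mem_Ici.2 zero_le_one) (mem_Ici.2 hx)
      (mem_Ici.2 (hx.trans hxy)) (by linarith) hy.ne hxy
  rw [one_rpow, ← neg_div_neg_eq, ← neg_div_neg_eq (-y ^ c - -1),
    div_le_div_iff₀ (by linarith) (by linarith)] at hslope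
  linarith

end Real

/-- If `πd θ = (πt θ) ^ c` for a constant `c ∈ (0,1)`, with `πt` increasing and interior,
then `t` is more difficult than `d`. -/
theorem stmt_3 (Θ : Set ℝ) (πt πd : ℝ → ℝ) (c : ℝ) (hc : c ∈ Ioo (0:ℝ) 1)
    (hrt : ∀ θ ∈ Θ, πt θ ∈ Ioo (0:ℝ) 1)
    (hdef : ∀ θ ∈ Θ, πd θ = (πt θ) ^ c)
    (hmono : ∀ θ ∈ Θ, ∀ θ' ∈ Θ, θ ≤ θ' → πt θ ≤ πt θ') :
    ∀ θ ∈ Θ, ∀ θ' ∈ Θ, θ' < θ →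
      πt θ * πd θ' ≥ πd θ * πt θ' ∧
      (1 - πt θ) * (1 - πd θ') ≥ (1 - πd θ) * (1 - πt θ') := by
  intro θ hθ θ' hθ' hlt
  have hle : πt θ' ≤ πt θ := hmono θ' hθ' θ hθ hlt.le
  rw [hdef θ hθ, hdef θ' hθ']
  exact ⟨Real.rpow_mul_le_mul_rpow hc.2.le (hrt θ' hθ').1 hle,
    Real.one_sub_rpow_mul_one_sub_le hc.1.le hc.2.le (hrt θ' hθ').1.le hle (hrt θ hθ).2⟩
end

section
/- If π_d(θ) = β·π_t(θ) + (1−β)·c for constants β, c ∈ [0,1], and π_t is increasing with values in (0,1), then t is more accurate than d. -/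
open Set

/-!
Write `πd = β • πt + k` with `k = (1 - β) c`, and likewise `1 - πd = β • (1 - πt) + k'` with
`k' = (1 - β)(1 - c)`. In both cross-products the `β`-terms cancel, leaving
`k (πt θ - πt θ')` and `k' (πt θ - πt θ')`, which are nonnegative because `β, c ∈ [0, 1]` and
`πt` is increasing.
-/

theorem affine_mul_le_mul_affine {R : Type*} [CommRing R] [PartialOrder R] [IsOrderedRing R]
    (β : R) {k a b : R} (hk : 0 ≤ k) (hba : b ≤ a) :
    (β * a + k) * b ≤ a * (β * b + k) := by
  have : k * b ≤ k * a := mul_le_mul_of_nonneg_left hba hk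
  linear_combination this

theorem stmt_5_general (Θ : Set ℝ) (πt πd : ℝ → ℝ) (β c : ℝ)
    (hβ : β ∈ Icc (0:ℝ) 1) (hc : c ∈ Icc (0:ℝ) 1)
    (hdef : ∀ θ ∈ Θ, πd θ = β * πt θ + (1 - β) * c)
    (hmono : ∀ θ ∈ Θ, ∀ θ' ∈ Θ, θ ≤ θ' → πt θ ≤ πt θ') :
    ∀ θ ∈ Θ, ∀ θ' ∈ Θ, θ' < θ →
      πt θ * πd θ' ≥ πd θ * πt θ' ∧
      (1 - πt θ) * (1 - πd θ') ≤ (1 - πd θ) * (1 - πt θ') := by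
  intro θ hθ θ' hθ' hlt
  have hle : πt θ' ≤ πt θ := hmono θ' hθ' θ hθ hlt.le
  have hβ' : 0 ≤ 1 - β := sub_nonneg.2 hβ.2
  have hdef' : ∀ x ∈ Θ, 1 - πd x = β * (1 - πt x) + (1 - β) * (1 - c) := fun x hx => by
    rw [hdef x hx]; ring
  constructor
  · rw [hdef θ hθ, hdef θ' hθ']
    exact affine_mul_le_mul_affine β (mul_nonneg hβ' hc.1) hle
  · rw [hdef' θ hθ, hdef' θ' hθ', mul_comm (1 - πt θ), mul_comm (β * (1 - πt θ) + _)]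
    exact affine_mul_le_mul_affine β (mul_nonneg hβ' (sub_nonneg.2 hc.2)) (by linarith)

/-- If `πd = β·πt + (1−β)·c` for constants `β, c ∈ [0,1]` and `πt` is increasing with values
in `(0,1)`, then `t` is more accurate than `d`. -/
theorem stmt_5 (Θ : Set ℝ) (πt πd : ℝ → ℝ) (β c : ℝ)
    (hβ : β ∈ Icc (0:ℝ) 1) (hc : c ∈ Icc (0:ℝ) 1)
    (hrt : ∀ θ ∈ Θ, πt θ ∈ Ioo (0:ℝ) 1)
    (hdef : ∀ θ ∈ Θ, πd θ = β * πt θ + (1 - β) * c)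
    (hmono : ∀ θ ∈ Θ, ∀ θ' ∈ Θ, θ ≤ θ' → πt θ ≤ πt θ') :
    ∀ θ ∈ Θ, ∀ θ' ∈ Θ, θ' < θ →
      πt θ * πd θ' ≥ πd θ * πt θ' ∧
      (1 - πt θ) * (1 - πd θ') ≤ (1 - πd θ) * (1 - πt θ') :=
  stmt_5_general Θ πt πd β c hβ hc hdef hmono
end

section
/- Let π_t : [θ̲, θ̄] → (0,1) be differentiable and increasing, and define π_d by π_d'(θ) = c·π_t'(θ) for a constant c ∈ [0,1) with π_d(θ̲) = π_t(θ̲). Then t is more accurate than d. -/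
open Set

/-! Since `π_d' = c π_t'` and the two tests agree at `θ̲`, `π_d` is the mixture
`c π_t + (1 - c) π_t(θ̲)`. For such a mixture both cross differences in the accuracy
condition factor as `(1 - c) a (x - y)`, with `a = π_t(θ̲)` for the high signal and
`a = 1 - π_t(θ̲)` for the low one, so they are nonnegative because `π_t` is increasing. -/

theorem eq_const_mul_add_of_hasDerivAt {f g g' : ℝ → ℝ} {a b c : ℝ}
    (hg : ∀ x ∈ Icc a b, HasDerivAt g (g' x) x)
    (hf : ∀ x ∈ Icc a b, HasDerivAt f (c * g' x) x) :
    ∀ x ∈ Icc a b, f x = c * g x + (f a - c * g a) := by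
  have hderiv : ∀ x ∈ Icc a b, HasDerivAt (fun y => f y - c * g y) 0 x := fun x hx => by
    simpa using! (hf x hx).sub ((hg x hx).const_mul c)
  intro x hx
  have := constant_of_has_deriv_right_zero
    (fun y hy => (hderiv y hy).continuousAt.continuousWithinAt)
    (fun y hy => (hderiv y (Ico_subset_Icc_self hy)).hasDerivWithinAt) x hx
  linarith

theorem mix_mul_le_mul_mix {a c x y : ℝ} (hc : c ≤ 1) (ha : 0 ≤ a) (hyx : y ≤ x) :
    (c * x + (1 - c) * a) * y ≤ x * (c * y + (1 - c) * a) := by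
  have : x * (c * y + (1 - c) * a) - (c * x + (1 - c) * a) * y = (1 - c) * a * (x - y) := by
    ring
  nlinarith [mul_nonneg (mul_nonneg (sub_nonneg.2 hc) ha) (sub_nonneg.2 hyx)]

theorem stmt_6_general (lo hi : ℝ) (πt πd πt' : ℝ → ℝ) (c : ℝ)
    (hc : c ∈ Ico (0:ℝ) 1)
    (hdt : ∀ θ ∈ Icc lo hi, HasDerivAt πt (πt' θ) θ)
    (hdd : ∀ θ ∈ Icc lo hi, HasDerivAt πd (c * πt' θ) θ)
    (hrt : ∀ θ ∈ Icc lo hi, πt θ ∈ Ioo (0:ℝ) 1)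
    (hmono : ∀ θ ∈ Icc lo hi, ∀ θ' ∈ Icc lo hi, θ ≤ θ' → πt θ ≤ πt θ')
    (hinit : πd lo = πt lo) :
    ∀ θ ∈ Icc lo hi, ∀ θ' ∈ Icc lo hi, θ' < θ →
      πt θ * πd θ' ≥ πd θ * πt θ' ∧
      (1 - πt θ) * (1 - πd θ') ≤ (1 - πd θ) * (1 - πt θ') := by
  have hmix : ∀ θ ∈ Icc lo hi, πd θ = c * πt θ + (1 - c) * πt lo := fun θ hθ => by
    rw [eq_const_mul_add_of_hasDerivAt hdt hdd θ hθ, hinit]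
    ring
  intro θ hθ θ' hθ' hlt
  have hlo : lo ∈ Icc lo hi := ⟨le_rfl, hθ'.1.trans hθ'.2⟩
  have hlow := hrt lo hlo
  have hle : πt θ' ≤ πt θ := hmono θ' hθ' θ hθ hlt.le
  have hmix_compl : ∀ θ ∈ Icc lo hi,
      1 - πd θ = c * (1 - πt θ) + (1 - c) * (1 - πt lo) := fun θ hθ => by
    rw [hmix θ hθ]
    ring
  constructor
  · rw [hmix θ hθ, hmix θ' hθ']
    exact mix_mul_le_mul_mix hc.2.le hlow.1.le hle
  · rw [hmix_compl θ hθ, hmix_compl θ' hθ', mul_comm (1 - πt θ), mul_comm (_ + _) (1 - πt θ')]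
    exact mix_mul_le_mul_mix hc.2.le (sub_nonneg.2 hlow.2.le) (sub_le_sub_left hle 1)

/-- If `πt` is differentiable and increasing with values in `(0,1)`, and `πd` has derivative
`c·πt'` for a constant `c ∈ [0,1)` with `πd(θ̲) = πt(θ̲)`, then `t` is more accurate than `d`. -/
theorem stmt_6 (lo hi : ℝ) (hlohi : lo < hi) (πt πd πt' : ℝ → ℝ) (c : ℝ)
    (hc : c ∈ Ico (0:ℝ) 1)
    (hdt : ∀ θ ∈ Icc lo hi, HasDerivAt πt (πt' θ) θ)
    (hdd : ∀ θ ∈ Icc lo hi, HasDerivAt πd (c * πt' θ) θ)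
    (hrt : ∀ θ ∈ Icc lo hi, πt θ ∈ Ioo (0:ℝ) 1)
    (hmono : ∀ θ ∈ Icc lo hi, ∀ θ' ∈ Icc lo hi, θ ≤ θ' → πt θ ≤ πt θ')
    (hinit : πd lo = πt lo) :
    ∀ θ ∈ Icc lo hi, ∀ θ' ∈ Icc lo hi, θ' < θ →
      πt θ * πd θ' ≥ πd θ * πt θ' ∧
      (1 - πt θ) * (1 - πd θ') ≤ (1 - πd θ) * (1 - πt θ') :=
  stmt_6_general lo hi πt πd πt' c hc hdt hdd hrt hmono hinit
end

section
/- If test t is Blackwell more informative than test d (i.e., d is a garbling of t: there exists a stochastic matrix M on {h,l} with π_d(·|θ) = M ∘ π_t(·|θ) for all θ), and π_t is increasing, then t is more accurate than d. -/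
open Set

theorem garbling_mul_le_mul_garbling {a b x y : ℝ} (hb : 0 ≤ b) (hyx : y ≤ x) :
    (a * x + b * (1 - x)) * y ≤ x * (a * y + b * (1 - y)) := by
  have cross : x * (a * y + b * (1 - y)) - (a * x + b * (1 - x)) * y = b * (x - y) := by ring
  linarith [mul_nonneg hb (sub_nonneg.2 hyx)]

theorem one_sub_mul_one_sub_garbling_le {a b x y : ℝ} (ha : a ≤ 1) (hyx : y ≤ x) :
    (1 - x) * (1 - (a * y + b * (1 - y))) ≤ (1 - (a * x + b * (1 - x))) * (1 - y) := by
  have cross : (1 - (a * x + b * (1 - x))) * (1 - y) - (1 - x) * (1 - (a * y + b * (1 - y)))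
      = (1 - a) * (x - y) := by ring
  linarith [mul_nonneg (sub_nonneg.2 ha) (sub_nonneg.2 hyx)]

theorem stmt_7_general (Θ : Set ℝ) (πt πd : ℝ → ℝ) (a b : ℝ)
    (ha : a ∈ Icc (0:ℝ) 1) (hb : b ∈ Icc (0:ℝ) 1)
    (hgarble : ∀ θ ∈ Θ, πd θ = a * πt θ + b * (1 - πt θ))
    (hmono : ∀ θ ∈ Θ, ∀ θ' ∈ Θ, θ ≤ θ' → πt θ ≤ πt θ') :
    ∀ θ ∈ Θ, ∀ θ' ∈ Θ, θ' < θ →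
      πt θ * πd θ' ≥ πd θ * πt θ' ∧
      (1 - πt θ) * (1 - πd θ') ≤ (1 - πd θ) * (1 - πt θ') := by
  intro θ hθ θ' hθ' hlt
  have hle := hmono θ' hθ' θ hθ hlt.le
  rw [hgarble θ hθ, hgarble θ' hθ']
  exact ⟨garbling_mul_le_mul_garbling hb.1 hle, one_sub_mul_one_sub_garbling_le ha.2 hle⟩

/-- If `d` is a garbling of `t` (Blackwell: `πd = a·πt + b·(1−πt)` with `a, b ∈ [0,1]`) and
`πt` is increasing, then `t` is more accurate than `d`. -/
theorem stmt_7 (Θ : Set ℝ) (πt πd : ℝ → ℝ) (a b : ℝ)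
    (ha : a ∈ Icc (0:ℝ) 1) (hb : b ∈ Icc (0:ℝ) 1)
    (hrt : ∀ θ ∈ Θ, πt θ ∈ Icc (0:ℝ) 1)
    (hgarble : ∀ θ ∈ Θ, πd θ = a * πt θ + b * (1 - πt θ))
    (hmono : ∀ θ ∈ Θ, ∀ θ' ∈ Θ, θ ≤ θ' → πt θ ≤ πt θ') :
    ∀ θ ∈ Θ, ∀ θ' ∈ Θ, θ' < θ →
      πt θ * πd θ' ≥ πd θ * πt θ' ∧
      (1 - πt θ) * (1 - πd θ') ≤ (1 - πd θ) * (1 - πt θ') :=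
  stmt_7_general Θ πt πd a b ha hb hgarble hmono
end

section
/- Let tests t, d satisfy the strict difficulty comparison in the sense that (1−π_t(θ))/(1−π_d(θ)) is increasing in θ with values in (0,1]. Fix acceptance probabilities α, α' ∈ [0,1). If a type θ₀ weakly prefers the pair (d, α') to (t, α), i.e., π_d(θ₀) + α'(1−π_d(θ₀)) ≥ π_t(θ₀) + α(1−π_t(θ₀)), then every type θ > θ₀ also weakly prefers (d, α') to (t, α). (Single-crossing of the selection into the easier test with a more lenient acceptance rule.) -/
/-! The rejection probability of `(π, α)` at `θ` is `(1 - α)(1 - π θ)`, so `θ` weakly prefers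
`(d, α')` to `(t, α)` iff `1 - α' ≤ (1 - α) · (1 - π_t θ)/(1 - π_d θ)`. The right-hand side is
increasing in `θ` because `1 - α ≥ 0`, so once the inequality holds it keeps holding. -/

open Set

theorem add_mul_one_sub_le_add_mul_one_sub_iff {pt pd α α' : ℝ} (hpd : pd < 1) :
    pt + α * (1 - pt) ≤ pd + α' * (1 - pd) ↔ 1 - α' ≤ (1 - α) * ((1 - pt) / (1 - pd)) := by
  rw [mul_div_assoc', le_div_iff₀ (sub_pos.2 hpd)]
  constructor <;> intro h <;> linarith

theorem stmt_12_general (Θ : Set ℝ) (πt πd : ℝ → ℝ) (α α' : ℝ)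
    (hα : α ∈ Ico (0:ℝ) 1)
    (hrd : ∀ θ ∈ Θ, πd θ ∈ Ioo (0:ℝ) 1)
    (hratio_mono : ∀ θ ∈ Θ, ∀ θ' ∈ Θ, θ' ≤ θ →
      (1 - πt θ') / (1 - πd θ') ≤ (1 - πt θ) / (1 - πd θ))
    (θ₀ : ℝ) (hθ₀ : θ₀ ∈ Θ)
    (hpref : πd θ₀ + α' * (1 - πd θ₀) ≥ πt θ₀ + α * (1 - πt θ₀)) :
    ∀ θ ∈ Θ, θ₀ < θ → πd θ + α' * (1 - πd θ) ≥ πt θ + α * (1 - πt θ) := by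
  intro θ hθ hlt
  rw [ge_iff_le, add_mul_one_sub_le_add_mul_one_sub_iff (hrd θ₀ hθ₀).2] at hpref
  rw [ge_iff_le, add_mul_one_sub_le_add_mul_one_sub_iff (hrd θ hθ).2]
  calc 1 - α' ≤ (1 - α) * ((1 - πt θ₀) / (1 - πd θ₀)) := hpref
    _ ≤ (1 - α) * ((1 - πt θ) / (1 - πd θ)) :=
      mul_le_mul_of_nonneg_left (hratio_mono θ hθ θ₀ hθ₀ hlt.le) (sub_nonneg.2 hα.2.le)

/-- Single-crossing of selection into the easier test with a more lenient acceptance rule: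
if the ratio `(1−πt)/(1−πd)` is increasing with values in `(0,1]`, and a type `θ₀` weakly
prefers `(d, α')` to `(t, α)`, then every higher type does too. -/
theorem stmt_12 (Θ : Set ℝ) (πt πd : ℝ → ℝ) (α α' : ℝ)
    (hα : α ∈ Ico (0:ℝ) 1) (hα' : α' ∈ Ico (0:ℝ) 1)
    (hrt : ∀ θ ∈ Θ, πt θ ∈ Ioo (0:ℝ) 1)
    (hrd : ∀ θ ∈ Θ, πd θ ∈ Ioo (0:ℝ) 1)
    (hratio_range : ∀ θ ∈ Θ, (1 - πt θ) / (1 - πd θ) ∈ Ioc (0:ℝ) 1)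
    (hratio_mono : ∀ θ ∈ Θ, ∀ θ' ∈ Θ, θ' ≤ θ →
      (1 - πt θ') / (1 - πd θ') ≤ (1 - πt θ) / (1 - πd θ))
    (θ₀ : ℝ) (hθ₀ : θ₀ ∈ Θ)
    (hpref : πd θ₀ + α' * (1 - πd θ₀) ≥ πt θ₀ + α * (1 - πt θ₀)) :
    ∀ θ ∈ Θ, θ₀ < θ → πd θ + α' * (1 - πd θ) ≥ πt θ + α * (1 - πt θ) :=
  stmt_12_general Θ πt πd α α' hα hrd hratio_mono θ₀ hθ₀ hpref
end

section
/- Fix a cutoff strategy: given any acceptance rule (α(h), α(l)) for a binary test t with π_t increasing and π_t(0) ∈ (0,1), there exists a cutoff rule α* (i.e., α*(l) > 0 implies α*(h) = 1, and α*(h) < 1 implies α*(l) = 0) such that type 0 has the same acceptance probability under α and α*, every type θ < 0 has weakly higher acceptance probability under α than α*, and every type θ > 0 has weakly lower acceptance probability under α than α*. -/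
open Set

/-!
The acceptance probability `ah * p + al * (1 - p)` of a rule is affine in the signal
probability `p`, with slope `ah - al`. Two rules that agree at `p₀ = π_t 0` therefore differ
by `(slope difference) * (p - p₀)`, so it suffices to find a cutoff rule that agrees with `α`
at `p₀` and has slope at least `αh - αl`. Fill the high signal first: if the target value
`q` is at most `p₀` take `(q / p₀, 0)`, otherwise `(1, (q - p₀) / (1 - p₀))`; in either case
the slope can only have grown, because `αl ≥ 0`, resp. `αh ≤ 1`.
-/

def acceptProb (ah al p : ℝ) : ℝ := ah * p + al * (1 - p)

lemma acceptProb_sub_acceptProb {ah al bh bl p₀ : ℝ}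
    (heq : acceptProb ah al p₀ = acceptProb bh bl p₀) (p : ℝ) :
    acceptProb bh bl p - acceptProb ah al p = ((bh - bl) - (ah - al)) * (p - p₀) := by
  unfold acceptProb at *
  linear_combination -heq

lemma acceptProb_le_of_le {ah al bh bl p₀ p : ℝ}
    (heq : acceptProb ah al p₀ = acceptProb bh bl p₀) (hslope : ah - al ≤ bh - bl)
    (hp : p₀ ≤ p) : acceptProb ah al p ≤ acceptProb bh bl p := by
  have := acceptProb_sub_acceptProb heq p
  nlinarith [mul_nonneg (sub_nonneg.2 hslope) (sub_nonneg.2 hp)]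

lemma acceptProb_le_of_ge {ah al bh bl p₀ p : ℝ}
    (heq : acceptProb ah al p₀ = acceptProb bh bl p₀) (hslope : ah - al ≤ bh - bl)
    (hp : p ≤ p₀) : acceptProb bh bl p ≤ acceptProb ah al p := by
  have := acceptProb_sub_acceptProb heq p
  nlinarith [mul_nonneg (sub_nonneg.2 hslope) (sub_nonneg.2 hp)]

lemma exists_cutoff_acceptProb_eq {p₀ ah al : ℝ} (hp₀ : p₀ ∈ Ioo (0 : ℝ) 1)
    (hah : ah ∈ Icc (0 : ℝ) 1) (hal : al ∈ Icc (0 : ℝ) 1) :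
    ∃ bh bl : ℝ, bh ∈ Icc (0 : ℝ) 1 ∧ bl ∈ Icc (0 : ℝ) 1 ∧
      (0 < bl → bh = 1) ∧ (bh < 1 → bl = 0) ∧
      acceptProb ah al p₀ = acceptProb bh bl p₀ ∧ ah - al ≤ bh - bl := by
  obtain ⟨hp₀0, hp₀1⟩ := hp₀
  obtain ⟨hah0, hah1⟩ := hah
  obtain ⟨hal0, hal1⟩ := hal
  set q := acceptProb ah al p₀ with hq
  have hq0 : 0 ≤ q := by unfold q acceptProb; nlinarith
  have hq1 : q ≤ 1 := by unfold q acceptProb; nlinarith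
  rcases le_or_gt q p₀ with hle | hgt
  · refine ⟨q / p₀, 0, ⟨by positivity, div_le_one_of_le₀ hle hp₀0.le⟩, ⟨le_rfl, zero_le_one⟩,
      fun h => absurd h (lt_irrefl 0), fun _ => rfl, ?_, ?_⟩
    · simp only [acceptProb, zero_mul, add_zero, div_mul_cancel₀ q hp₀0.ne']
    · rw [sub_zero, le_div_iff₀ hp₀0, hq, acceptProb]
      nlinarith
  · have h1p₀ : 0 < 1 - p₀ := by linarith
    refine ⟨1, (q - p₀) / (1 - p₀), ⟨zero_le_one, le_rfl⟩,
      ⟨div_nonneg (by linarith) h1p₀.le, div_le_one_of_le₀ (by linarith) h1p₀.le⟩,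
      fun _ => rfl, fun h => absurd h (lt_irrefl 1), ?_, ?_⟩
    · rw [acceptProb, div_mul_cancel₀ _ h1p₀.ne']
      ring
    · rw [le_sub_comm, div_le_iff₀ h1p₀, hq, acceptProb]
      nlinarith

theorem stmt_14_general (lo hi : ℝ) (hlo : lo < 0) (hhi : 0 < hi) (πt : ℝ → ℝ)
    (hmono : ∀ θ ∈ Icc lo hi, ∀ θ' ∈ Icc lo hi, θ ≤ θ' → πt θ ≤ πt θ')
    (h0 : πt 0 ∈ Ioo (0:ℝ) 1)
    (αh αl : ℝ) (hαh : αh ∈ Icc (0:ℝ) 1) (hαl : αl ∈ Icc (0:ℝ) 1) :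
    ∃ βh βl : ℝ, βh ∈ Icc (0:ℝ) 1 ∧ βl ∈ Icc (0:ℝ) 1 ∧
      (0 < βl → βh = 1) ∧ (βh < 1 → βl = 0) ∧
      αh * πt 0 + αl * (1 - πt 0) = βh * πt 0 + βl * (1 - πt 0) ∧
      (∀ θ ∈ Icc lo hi, θ < 0 →
        βh * πt θ + βl * (1 - πt θ) ≤ αh * πt θ + αl * (1 - πt θ)) ∧
      (∀ θ ∈ Icc lo hi, 0 < θ →
        αh * πt θ + αl * (1 - πt θ) ≤ βh * πt θ + βl * (1 - πt θ)) := by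
  obtain ⟨βh, βl, hβh, hβl, hcut_l, hcut_h, heq, hslope⟩ :=
    exists_cutoff_acceptProb_eq h0 hαh hαl
  have h0mem : (0 : ℝ) ∈ Icc lo hi := ⟨hlo.le, hhi.le⟩
  refine ⟨βh, βl, hβh, hβl, hcut_l, hcut_h, heq, ?_, ?_⟩
  · intro θ hθ hθneg
    exact acceptProb_le_of_ge heq hslope (hmono θ hθ 0 h0mem hθneg.le)
  · intro θ hθ hθpos
    exact acceptProb_le_of_le heq hslope (hmono 0 h0mem θ hθ hθpos.le)

/-- Every acceptance rule can be replaced by a cutoff rule that gives type `0` the same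
acceptance probability, weakly lowers the acceptance probability of negative types, and
weakly raises that of positive types. -/
theorem stmt_14 (lo hi : ℝ) (hlo : lo < 0) (hhi : 0 < hi) (πt : ℝ → ℝ)
    (hmono : ∀ θ ∈ Icc lo hi, ∀ θ' ∈ Icc lo hi, θ ≤ θ' → πt θ ≤ πt θ')
    (hr : ∀ θ ∈ Icc lo hi, πt θ ∈ Icc (0:ℝ) 1)
    (h0 : πt 0 ∈ Ioo (0:ℝ) 1)
    (αh αl : ℝ) (hαh : αh ∈ Icc (0:ℝ) 1) (hαl : αl ∈ Icc (0:ℝ) 1) :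
    ∃ βh βl : ℝ, βh ∈ Icc (0:ℝ) 1 ∧ βl ∈ Icc (0:ℝ) 1 ∧
      (0 < βl → βh = 1) ∧ (βh < 1 → βl = 0) ∧
      αh * πt 0 + αl * (1 - πt 0) = βh * πt 0 + βl * (1 - πt 0) ∧
      (∀ θ ∈ Icc lo hi, θ < 0 →
        βh * πt θ + βl * (1 - πt θ) ≤ αh * πt θ + αl * (1 - πt θ)) ∧
      (∀ θ ∈ Icc lo hi, 0 < θ →
        αh * πt θ + αl * (1 - πt θ) ≤ βh * πt θ + βl * (1 - πt θ)) :=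
  stmt_14_general lo hi hlo hhi πt hmono h0 αh αl hαh hαl
end

section
/- Let F be a cdf on Θ = [θ̲, θ̄] with density f, and t a binary test with π_t : Θ → (0,1) increasing, 0 < ∫π_t dF < 1. For μ ∈ [0, (1−π_t(θ̄))/(1−π̄_t)) and λ ∈ [0,1], define π_d(θ) = (λπ̄_t + (1−λ)π_t(θ)) / ((1−μ)(1−λ(1−π̄_t)) + μπ̄_t), where π̄_t = ∫π_t dF. Then π_d(θ) ∈ [0,1] for all θ, π_d is increasing, and t is more difficult than d. -/
/-!
Writing `c = 1 - m (1 - π̄t)`, the denominator equals `λπ̄t + (1 − λ)c`, so `πd` is the image of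
`πt` under the increasing affine map `x ↦ (λπ̄t + (1 − λ)x) / (λπ̄t + (1 − λ)c)`, which sends `c`
to `1`. The bound on `m` says exactly that `πt(θ̄) < c`, so `0 < πt < c` on `Θ`, and `c ≤ 1` because
`m ≥ 0`.
For such a map `g(x) = (a + b x) / (a + b c)` with `a, b ≥ 0`, and `x' ≤ x`, the two difficulty
inequalities reduce to `a (x − x') ≥ 0` and `b (1 − c) (x − x') ≥ 0`.
-/

open Set MeasureTheory

noncomputable def normalizedMix (a b c x : ℝ) : ℝ := (a + b * x) / (a + b * c)

section NormalizedMix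

variable {a b c : ℝ}

theorem monotone_normalizedMix (hb : 0 ≤ b) (hD : 0 ≤ a + b * c) :
    Monotone (normalizedMix a b c) := fun x y hxy => by
  unfold normalizedMix
  gcongr

theorem normalizedMix_mem_Icc (ha : 0 ≤ a) (hb : 0 ≤ b) (hD : 0 < a + b * c) {x : ℝ}
    (hx : x ∈ Icc 0 c) : normalizedMix a b c x ∈ Icc 0 1 := by
  have hbx : b * x ≤ b * c := mul_le_mul_of_nonneg_left hx.2 hb
  exact ⟨div_nonneg (by nlinarith [hx.1]) hD.le, div_le_one_of_le₀ (by linarith) hD.le⟩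

theorem normalizedMix_mul_le (ha : 0 ≤ a) (hD : 0 < a + b * c) {x x' : ℝ} (hx : x' ≤ x) :
    normalizedMix a b c x * x' ≤ x * normalizedMix a b c x' := by
  unfold normalizedMix
  rw [div_mul_eq_mul_div, mul_div_assoc', div_le_div_iff_of_pos_right hD]
  nlinarith [mul_nonneg ha (sub_nonneg.2 hx)]

theorem one_sub_normalizedMix_mul_le (hb : 0 ≤ b) (hc : c ≤ 1) (hD : 0 < a + b * c)
    {x x' : ℝ} (hx : x' ≤ x) :
    (1 - normalizedMix a b c x) * (1 - x') ≤ (1 - x) * (1 - normalizedMix a b c x') := by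
  have hsub : ∀ y, 1 - normalizedMix a b c y = b * (c - y) / (a + b * c) := fun y => by
    unfold normalizedMix
    field_simp
    ring
  rw [hsub, hsub, div_mul_eq_mul_div, mul_div_assoc', div_le_div_iff_of_pos_right hD]
  nlinarith [mul_nonneg (mul_nonneg hb (sub_nonneg.2 hc)) (sub_nonneg.2 hx)]

end NormalizedMix

theorem stmt_15_general (lo hi : ℝ) (hlohi : lo < hi)
    (πt πd : ℝ → ℝ)
    (hrt : ∀ θ ∈ Icc lo hi, πt θ ∈ Ioo (0:ℝ) 1)
    (hmono : ∀ θ ∈ Icc lo hi, ∀ θ' ∈ Icc lo hi, θ ≤ θ' → πt θ ≤ πt θ')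
    (pbar : ℝ) (hp : pbar ∈ Ioo (0:ℝ) 1)
    (m lam : ℝ) (hm : 0 ≤ m) (hm' : m < (1 - πt hi) / (1 - pbar))
    (hlam : lam ∈ Icc (0:ℝ) 1)
    (hdef : ∀ θ, πd θ = (lam * pbar + (1 - lam) * πt θ) /
      ((1 - m) * (1 - lam * (1 - pbar)) + m * pbar)) :
    (∀ θ ∈ Icc lo hi, πd θ ∈ Icc (0:ℝ) 1) ∧
    (∀ θ ∈ Icc lo hi, ∀ θ' ∈ Icc lo hi, θ ≤ θ' → πd θ ≤ πd θ') ∧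
    (∀ θ ∈ Icc lo hi, ∀ θ' ∈ Icc lo hi, θ' < θ →
      πt θ * πd θ' ≥ πd θ * πt θ' ∧
      (1 - πt θ) * (1 - πd θ') ≥ (1 - πd θ) * (1 - πt θ')) := by
  have hπd : ∀ θ, πd θ = normalizedMix (lam * pbar) (1 - lam) (1 - m * (1 - pbar)) (πt θ) :=
    fun θ => by
      rw [hdef, normalizedMix]
      congr 1
      ring
  set c := 1 - m * (1 - pbar)
  have hhi : hi ∈ Icc lo hi := ⟨hlohi.le, le_rfl⟩
  have hc_gt : πt hi < c := by
    have := (lt_div_iff₀ (sub_pos.2 hp.2)).1 hm'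
    linarith
  have hc_le : c ≤ 1 := by nlinarith [hp.2]
  have ha : 0 ≤ lam * pbar := mul_nonneg hlam.1 hp.1.le
  have hb : 0 ≤ 1 - lam := sub_nonneg.2 hlam.2
  have hD : 0 < lam * pbar + (1 - lam) * c := by
    nlinarith [(hrt hi hhi).1, hp.1, hlam.1, hlam.2]
  refine ⟨fun θ hθ => ?_, fun θ hθ θ' hθ' hle => ?_, fun θ hθ θ' hθ' hlt => ?_⟩
  · rw [hπd]
    exact normalizedMix_mem_Icc ha hb hD
      ⟨(hrt θ hθ).1.le, (hmono θ hθ hi hhi hθ.2).trans hc_gt.le⟩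
  · rw [hπd, hπd]
    exact monotone_normalizedMix hb hD.le (hmono θ hθ θ' hθ' hle)
  · have hle := hmono θ' hθ' θ hθ hlt.le
    rw [hπd, hπd]
    exact ⟨normalizedMix_mul_le ha hD hle, one_sub_normalizedMix_mul_le hb hc_le hD hle⟩

/-- The mixed test `πd(θ) = (λπ̄t + (1−λ)πt(θ)) / ((1−m)(1−λ(1−π̄t)) + mπ̄t)` is a
well-defined monotone test that is easier than `t`. -/
theorem stmt_15 (lo hi : ℝ) (hlohi : lo < hi) (P : Measure ℝ) [IsProbabilityMeasure P]
    (hsupp : P (Icc lo hi) = 1)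
    (πt πd : ℝ → ℝ)
    (hrt : ∀ θ ∈ Icc lo hi, πt θ ∈ Ioo (0:ℝ) 1)
    (hmono : ∀ θ ∈ Icc lo hi, ∀ θ' ∈ Icc lo hi, θ ≤ θ' → πt θ ≤ πt θ')
    (hint : Integrable πt P)
    (pbar : ℝ) (hpbar : pbar = ∫ θ, πt θ ∂P) (hp : pbar ∈ Ioo (0:ℝ) 1)
    (m lam : ℝ) (hm : 0 ≤ m) (hm' : m < (1 - πt hi) / (1 - pbar))
    (hlam : lam ∈ Icc (0:ℝ) 1)
    (hdef : ∀ θ, πd θ = (lam * pbar + (1 - lam) * πt θ) /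
      ((1 - m) * (1 - lam * (1 - pbar)) + m * pbar)) :
    (∀ θ ∈ Icc lo hi, πd θ ∈ Icc (0:ℝ) 1) ∧
    (∀ θ ∈ Icc lo hi, ∀ θ' ∈ Icc lo hi, θ ≤ θ' → πd θ ≤ πd θ') ∧
    (∀ θ ∈ Icc lo hi, ∀ θ' ∈ Icc lo hi, θ' < θ →
      πt θ * πd θ' ≥ πd θ * πt θ' ∧
      (1 - πt θ) * (1 - πd θ') ≥ (1 - πd θ) * (1 - πt θ')) :=
  stmt_15_general lo hi hlohi πt πd hrt hmono pbar hp m lam hm hm' hlam hdef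
end

section
/- With binary signals, Lehmann's accuracy order coincides with the likelihood-ratio characterization: embedding a binary test t into continuous signals on [0,1] via F_t(x|θ) = 2(1−π_t(θ))x for x < 1/2 and F_t(x|θ) = 1 + 2π_t(θ)(x−1) for x ≥ 1/2, the condition F_t(F_t^{-1}(q|θ')|θ) ≤ F_d(F_d^{-1}(q|θ')|θ) for all q ∈ [0,1] and all θ > θ' holds if and only if π_t(θ)/π_t(θ') ≥ π_d(θ)/π_d(θ') and (1−π_d(θ))/(1−π_d(θ')) ≥ (1−π_t(θ))/(1−π_t(θ')) for all θ > θ'. -/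
open Set

/-- Embedding of a binary test into continuous signals on `[0,1]`. -/
noncomputable def Fc (π : ℝ → ℝ) (θ x : ℝ) : ℝ :=
  if x < 1/2 then 2 * (1 - π θ) * x else 1 + 2 * π θ * (x - 1)

/-- The (generalized) inverse of `Fc π θ`. -/
noncomputable def Finv (π : ℝ → ℝ) (θ q : ℝ) : ℝ :=
  if q < 1 - π θ then q / (2 * (1 - π θ)) else q / (2 * π θ) + (2 * π θ - 1) / (2 * π θ)

lemma comp_eq (π : ℝ → ℝ) (θ θ' q : ℝ) (h1 : 0 < π θ') (h2 : π θ' < 1) :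
    Fc π θ (Finv π θ' q) =
      if q < 1 - π θ' then q * ((1 - π θ) / (1 - π θ'))
      else 1 - (1 - q) * (π θ / π θ') := by
  have hp : (0:ℝ) < 1 - π θ' := by linarith
  by_cases h : q < 1 - π θ'
  · rw [Finv, if_pos h, Fc, if_pos (by rw [div_lt_iff₀ (by linarith)]; linarith),
      if_pos h]
    field_simp
  · push_neg at h
    rw [Finv, if_neg (not_lt.2 h), Fc, if_neg, if_neg (not_lt.2 h)]
    · field_simp
      ring
    · push_neg
      rw [← add_div, le_div_iff₀ (by linarith)]
      linarith

/-- With binary signals, Lehmann's accuracy order coincides with the likelihood-ratio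
characterisation. -/
theorem stmt_16 (πt πd : ℝ → ℝ)
    (hrt : ∀ θ, πt θ ∈ Ioo (0:ℝ) 1) (hrd : ∀ θ, πd θ ∈ Ioo (0:ℝ) 1)
    (hmt : Monotone πt) (hmd : Monotone πd) :
    (∀ q ∈ Icc (0:ℝ) 1, ∀ θ θ' : ℝ, θ' < θ →
        Fc πt θ (Finv πt θ' q) ≤ Fc πd θ (Finv πd θ' q)) ↔
      (∀ θ θ' : ℝ, θ' < θ →
        πt θ / πt θ' ≥ πd θ / πd θ' ∧
        (1 - πd θ) / (1 - πd θ') ≥ (1 - πt θ) / (1 - πt θ')) := by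
  constructor
  · intro H θ θ' hlt
    obtain ⟨ha0, ha1⟩ := hrt θ'
    obtain ⟨hb0, hb1⟩ := hrt θ
    obtain ⟨hc0, hc1⟩ := hrd θ'
    obtain ⟨hd0, hd1⟩ := hrd θ
    constructor
    · -- use q = max (1 - πt θ') (1 - πd θ')
      set q : ℝ := max (1 - πt θ') (1 - πd θ') with hq
      have hq1 : q ≤ 1 := max_le (by linarith) (by linarith)
      have hq0 : 0 ≤ q := le_trans (by linarith) (le_max_left _ _)
      have hm : 0 < 1 - q := by
        have : q < 1 := max_lt (by linarith) (by linarith)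
        linarith
      have h := H q ⟨hq0, hq1⟩ θ θ' hlt
      rw [comp_eq πt θ θ' q ha0 ha1, comp_eq πd θ θ' q hc0 hc1,
        if_neg (not_lt.2 (le_max_left _ _)), if_neg (not_lt.2 (le_max_right _ _))] at h
      exact (mul_le_mul_iff_right₀ hm).mp (by linarith)
    · -- use q = min (1 - πt θ') (1 - πd θ') / 2
      set q : ℝ := min (1 - πt θ') (1 - πd θ') / 2 with hq
      have hmp : 0 < min (1 - πt θ') (1 - πd θ') := lt_min (by linarith) (by linarith)
      have hq0 : 0 < q := by positivity
      have hq1 : q ≤ 1 := by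
        have : min (1 - πt θ') (1 - πd θ') ≤ 1 - πt θ' := min_le_left _ _
        simp only [hq]; linarith
      have hqt : q < 1 - πt θ' := lt_of_lt_of_le (by linarith) (min_le_left _ _)
      have hqd : q < 1 - πd θ' := lt_of_lt_of_le (by linarith) (min_le_right _ _)
      have h := H q ⟨hq0.le, hq1⟩ θ θ' hlt
      rw [comp_eq πt θ θ' q ha0 ha1, comp_eq πd θ θ' q hc0 hc1,
        if_pos hqt, if_pos hqd] at h
      exact (mul_le_mul_iff_right₀ hq0).mp h
  · intro H q hq θ θ' hlt
    obtain ⟨hq0, hq1⟩ := hq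
    obtain ⟨ha0, ha1⟩ := hrt θ'
    obtain ⟨hb0, hb1⟩ := hrt θ
    obtain ⟨hc0, hc1⟩ := hrd θ'
    obtain ⟨hd0, hd1⟩ := hrd θ
    obtain ⟨hA, hB⟩ := H θ θ' hlt
    rw [ge_iff_le, div_le_div_iff₀ hc0 ha0] at hA
    rw [ge_iff_le, div_le_div_iff₀ (by linarith) (by linarith)] at hB
    rw [comp_eq πt θ θ' q ha0 ha1, comp_eq πd θ θ' q hc0 hc1]
    split_ifs with h1 h2 h2
    · -- both below the kinks
      have : (1 - πt θ) / (1 - πt θ') ≤ (1 - πd θ) / (1 - πd θ') := by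
        rw [div_le_div_iff₀ (by linarith) (by linarith)]; linarith
      exact mul_le_mul_of_nonneg_left this hq0
    · -- q < 1 - πt θ', q ≥ 1 - πd θ'
      push_neg at h2
      rw [← sub_nonneg]
      have hne1 : (1:ℝ) - πt θ' ≠ 0 := by linarith
      have hne2 : πd θ' ≠ 0 := ne_of_gt hc0
      have key : 1 - (1 - q) * (πd θ / πd θ') - q * ((1 - πt θ) / (1 - πt θ')) =
          ((1 - πt θ') * πd θ' - (1 - q) * πd θ * (1 - πt θ') - q * (1 - πt θ) * πd θ') /
            ((1 - πt θ') * πd θ') := by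
        field_simp
      rw [key]
      apply div_nonneg _ (le_of_lt (mul_pos (by linarith) hc0))
      nlinarith [mul_nonneg (by linarith : (0:ℝ) ≤ q - (1 - πd θ'))
          (by nlinarith : (0:ℝ) ≤ (1 - πt θ') * (πt θ * πd θ' - πd θ * πt θ')),
        mul_nonneg (by linarith : (0:ℝ) ≤ 1 - πt θ' - q)
          (by nlinarith : (0:ℝ) ≤ πd θ' * ((1 - πt θ') * (1 - πd θ) - (1 - πt θ) * (1 - πd θ')))]
    · -- q ≥ 1 - πt θ', q < 1 - πd θ'
      push_neg at h1
      rw [← sub_nonneg]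
      have hne1 : (1:ℝ) - πd θ' ≠ 0 := by linarith
      have hne2 : πt θ' ≠ 0 := ne_of_gt ha0
      have key : q * ((1 - πd θ) / (1 - πd θ')) - (1 - (1 - q) * (πt θ / πt θ')) =
          (q * (1 - πd θ) * πt θ' - πt θ' * (1 - πd θ') + (1 - q) * πt θ * (1 - πd θ')) /
            ((1 - πd θ') * πt θ') := by
        field_simp
        ring
      rw [key]
      apply div_nonneg _ (le_of_lt (mul_pos (by linarith) ha0))
      nlinarith [mul_nonneg (by linarith : (0:ℝ) ≤ q - (1 - πt θ'))
          (by nlinarith : (0:ℝ) ≤ (1 - πd θ') * (πt θ * πd θ' - πd θ * πt θ')),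
        mul_nonneg (by linarith : (0:ℝ) ≤ 1 - πd θ' - q)
          (by nlinarith : (0:ℝ) ≤ πt θ' * ((1 - πt θ') * (1 - πd θ) - (1 - πt θ) * (1 - πd θ')))]
    · -- both above the kinks
      have : πd θ / πd θ' ≤ πt θ / πt θ' := by
        rw [div_le_div_iff₀ hc0 ha0]; linarith
      linarith [mul_le_mul_of_nonneg_left this (by linarith : (0:ℝ) ≤ 1 - q)]
end

section
/- Let c : Δ(Θ) → ℝ be strictly convex with c(f) = 0 at the prior density f, and define the posterior-separable cost of a binary test t by C(t) = π̄_t·c(f_{th}) + (1−π̄_t)·c(f_{tl}), where π̄_t = ∫π_t dF, f_{th}(θ) = f(θ)π_t(θ)/π̄_t, f_{tl}(θ) = f(θ)(1−π_t(θ))/(1−π̄_t). For λ ∈ (0,1) and μ = 0, define π_d(θ) = (λπ̄_t + (1−λ)π_t(θ))/(1−λ(1−π̄_t)). Then C(d) < C(t), i.e., mixing a test toward its unconditional signal distribution strictly decreases posterior-separable cost. -/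
/-!
The prior is the `p`-average of the two posteriors of `t`. Mixing `t` with the uninformative test
leaves the low posterior unchanged and moves the high posterior to `λ f + (1 - λ) f_th`, whose cost
is strictly below `(1 - λ) c(f_th)` by strict convexity and `c(f) = 0`. After rescaling, `C(d)` is
then strictly below `q C(t)` with `q = (1 - λ) / (1 - λ(1 - p)) < 1`, and `C(t) > 0` by strict
Jensen at the prior.
-/

open Set

section Posteriors

variable {α : Type*} (f π : α → ℝ) {p lam : ℝ}

theorem posterior_mix_eq_prior (hp : p ≠ 0) (hp1 : 1 - p ≠ 0) :
    p • (fun θ => f θ * π θ / p) + (1 - p) • (fun θ => f θ * (1 - π θ) / (1 - p)) = f := by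
  funext θ
  simp only [Pi.add_apply, Pi.smul_apply, smul_eq_mul]
  field_simp
  ring

theorem mixedTest_posterior_high (hp : p ≠ 0) (hs : 1 - lam * (1 - p) ≠ 0) :
    (fun θ => f θ * ((lam * p + (1 - lam) * π θ) / (1 - lam * (1 - p))) /
        (p / (1 - lam * (1 - p)))) = lam • f + (1 - lam) • fun θ => f θ * π θ / p := by
  funext θ
  simp only [Pi.add_apply, Pi.smul_apply, smul_eq_mul]
  field_simp

theorem mixedTest_posterior_low (hp1 : 1 - p ≠ 0) (hlam1 : 1 - lam ≠ 0)
    (hs : 1 - lam * (1 - p) ≠ 0) :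
    (fun θ => f θ * (1 - (lam * p + (1 - lam) * π θ) / (1 - lam * (1 - p))) /
        (1 - p / (1 - lam * (1 - p)))) = fun θ => f θ * (1 - π θ) / (1 - p) := by
  have h1pd : 1 - p / (1 - lam * (1 - p)) = (1 - lam) * (1 - p) / (1 - lam * (1 - p)) := by
    field_simp
    ring
  funext θ
  rw [h1pd]
  field_simp
  ring

end Posteriors

section Cost

variable {E : Type*} [AddCommGroup E] [Module ℝ E] {D : Set E} {c : E → ℝ}
  {f x y : E} {p lam : ℝ}

theorem StrictConvexOn.binaryCost_pos (hc : StrictConvexOn ℝ D c) (hx : x ∈ D) (hy : y ∈ D)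
    (hxf : x ≠ f) (hp : p ∈ Ioo (0 : ℝ) 1) (hbayes : p • x + (1 - p) • y = f) (hcf : c f = 0) :
    0 < p * c x + (1 - p) * c y := by
  have hxy : x ≠ y := by
    rintro rfl
    exact hxf (by rw [← hbayes, ← add_smul, add_sub_cancel, one_smul])
  have h := hc.2 hx hy hxy hp.1 (sub_pos.2 hp.2) (add_sub_cancel p 1)
  rwa [hbayes, hcf] at h

theorem StrictConvexOn.map_combo_lt_of_map_eq_zero (hc : StrictConvexOn ℝ D c) (hf : f ∈ D)
    (hx : x ∈ D) (hxf : x ≠ f) (hlam : lam ∈ Ioo (0 : ℝ) 1) (hcf : c f = 0) :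
    c (lam • f + (1 - lam) • x) < (1 - lam) * c x := by
  simpa [hcf] using hc.2 hf hx hxf.symm hlam.1 (sub_pos.2 hlam.2) (add_sub_cancel lam 1)

theorem StrictConvexOn.mixedTest_cost_lt (hc : StrictConvexOn ℝ D c) (hf : f ∈ D) (hx : x ∈ D)
    (hy : y ∈ D) (hxf : x ≠ f) (hp : p ∈ Ioo (0 : ℝ) 1) (hlam : lam ∈ Ioo (0 : ℝ) 1)
    (hbayes : p • x + (1 - p) • y = f) (hcf : c f = 0) :
    p / (1 - lam * (1 - p)) * c (lam • f + (1 - lam) • x) +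
        (1 - p / (1 - lam * (1 - p))) * c y < p * c x + (1 - p) * c y := by
  obtain ⟨hp0, hp1⟩ := hp
  obtain ⟨hl0, hl1⟩ := hlam
  have hs : 0 < 1 - lam * (1 - p) := by nlinarith
  set q := (1 - lam) / (1 - lam * (1 - p)) with hq
  have hq1 : q < 1 := by rw [div_lt_one hs]; nlinarith
  have hhigh : p / (1 - lam * (1 - p)) * (1 - lam) = q * p := by rw [hq]; field_simp
  have hlow : 1 - p / (1 - lam * (1 - p)) = q * (1 - p) := by rw [hq]; field_simp; ring
  have hC := hc.binaryCost_pos hx hy hxf ⟨hp0, hp1⟩ hbayes hcf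
  have hmix := mul_lt_mul_of_pos_left (hc.map_combo_lt_of_map_eq_zero hf hx hxf ⟨hl0, hl1⟩ hcf)
    (div_pos hp0 hs)
  calc p / (1 - lam * (1 - p)) * c (lam • f + (1 - lam) • x) +
        (1 - p / (1 - lam * (1 - p))) * c y
      < p / (1 - lam * (1 - p)) * ((1 - lam) * c x) + (1 - p / (1 - lam * (1 - p))) * c y := by
        linarith
    _ = q * (p * c x + (1 - p) * c y) := by
        linear_combination c x * hhigh + c y * hlow
    _ < p * c x + (1 - p) * c y := mul_lt_of_lt_one_left hC hq1

end Cost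

theorem stmt_19_general (f πt : ℝ → ℝ)
    (p : ℝ) (hp' : p ∈ Ioo (0:ℝ) 1)
    (D : Set (ℝ → ℝ)) (c : (ℝ → ℝ) → ℝ) (hconv : StrictConvexOn ℝ D c)
    (fth ftl : ℝ → ℝ)
    (hfth : fth = fun θ => f θ * πt θ / p)
    (hftl : ftl = fun θ => f θ * (1 - πt θ) / (1 - p))
    (hfD : f ∈ D) (hthD : fth ∈ D) (htlD : ftl ∈ D)
    (hc0 : c f = 0) (hne : fth ≠ f)
    (lam : ℝ) (hlam : lam ∈ Ioo (0:ℝ) 1)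
    (πd : ℝ → ℝ)
    (hπd : πd = fun θ => (lam * p + (1 - lam) * πt θ) / (1 - lam * (1 - p)))
    (pd : ℝ) (hpd : pd = p / (1 - lam * (1 - p)))
    (fdh fdl : ℝ → ℝ)
    (hfdh : fdh = fun θ => f θ * πd θ / pd)
    (hfdl : fdl = fun θ => f θ * (1 - πd θ) / (1 - pd)) :
    pd * c fdh + (1 - pd) * c fdl < p * c fth + (1 - p) * c ftl := by
  have hp0 : p ≠ 0 := hp'.1.ne'
  have hp1 : 1 - p ≠ 0 := (sub_pos.2 hp'.2).ne'
  have hs : 1 - lam * (1 - p) ≠ 0 := by nlinarith [hp'.1, hp'.2, hlam.1, hlam.2]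
  have hbayes : p • fth + (1 - p) • ftl = f := by
    rw [hfth, hftl]
    exact posterior_mix_eq_prior f πt hp0 hp1
  have hdh : fdh = lam • f + (1 - lam) • fth := by
    rw [hfdh, hπd, hpd, hfth]
    exact mixedTest_posterior_high f πt hp0 hs
  have hdl : fdl = ftl := by
    rw [hfdl, hπd, hpd, hftl]
    exact mixedTest_posterior_low f πt hp1 (sub_pos.2 hlam.2).ne' hs
  rw [hdh, hdl, hpd]
  exact hconv.mixedTest_cost_lt hfD hthD htlD hne hp' hlam hbayes hc0

/-- Mixing a test toward its unconditional signal distribution strictly decreases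
posterior-separable cost: `C(d) < C(t)` where `πd = (λπ̄t + (1−λ)πt)/(1−λ(1−π̄t))`. -/
theorem stmt_19 (lo hi : ℝ) (hlohi : lo < hi) (f πt : ℝ → ℝ)
    (hf : ∀ θ ∈ Icc lo hi, 0 ≤ f θ)
    (hf1 : (∫ θ in Icc lo hi, f θ) = 1)
    (hrt : ∀ θ ∈ Icc lo hi, πt θ ∈ Ioo (0:ℝ) 1)
    (p : ℝ) (hp : p = ∫ θ in Icc lo hi, πt θ * f θ) (hp' : p ∈ Ioo (0:ℝ) 1)
    (D : Set (ℝ → ℝ)) (c : (ℝ → ℝ) → ℝ) (hconv : StrictConvexOn ℝ D c)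
    (fth ftl : ℝ → ℝ)
    (hfth : fth = fun θ => f θ * πt θ / p)
    (hftl : ftl = fun θ => f θ * (1 - πt θ) / (1 - p))
    (hfD : f ∈ D) (hthD : fth ∈ D) (htlD : ftl ∈ D)
    (hc0 : c f = 0) (hne : fth ≠ f)
    (lam : ℝ) (hlam : lam ∈ Ioo (0:ℝ) 1)
    (πd : ℝ → ℝ)
    (hπd : πd = fun θ => (lam * p + (1 - lam) * πt θ) / (1 - lam * (1 - p)))
    (pd : ℝ) (hpd : pd = p / (1 - lam * (1 - p)))
    (fdh fdl : ℝ → ℝ)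
    (hfdh : fdh = fun θ => f θ * πd θ / pd)
    (hfdl : fdl = fun θ => f θ * (1 - πd θ) / (1 - pd)) :
    pd * c fdh + (1 - pd) * c fdl < p * c fth + (1 - p) * c ftl :=
  stmt_19_general f πt p hp' D c hconv fth ftl hfth hftl hfD hthD htlD hc0 hne lam hlam πd hπd pd
    hpd fdh fdl hfdh hfdl
end
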